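/- Pfaff–Saalschütz summation: for a nonnegative integer n, the terminating hypergeometric sum ∑_{k=0}^{n} ((a)_k (b)_k (-n)_k)/((c)_k (1+a+b-c-n)_k k!) equals ((c-a)_n (c-b)_n)/((c)_n (c-a-b)_n). -/
import Mathlib


/-- The rising factorial `(x)_k = x(x+1)⋯(x+k-1)`. -/
def rf (x : ℚ) (k : ℕ) : ℚ := ∏ i ∈ Finset.range k, (x + i)


lemma rf_zero (x : ℚ) : rf x 0 = 1 := by simp [rf]

lemma rf_succ (x : ℚ) (k : ℕ) : rf x (k+1) = rf x k * (x + k) :=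
  Finset.prod_range_succ _ _

lemma rf_succ' (x : ℚ) (k : ℕ) : rf x (k+1) = x * rf (x+1) k := by
  rw [rf, Finset.prod_range_succ']
  simp only [Nat.cast_zero, add_zero]
  rw [mul_comm, rf]
  congr 1
  exact Finset.prod_congr rfl fun i _ => by push_cast; ring

lemma rf_add (x : ℚ) (m l : ℕ) : rf x (m+l) = rf x m * rf (x+m) l := by
  rw [rf, Finset.prod_range_add, rf, rf]
  congr 1
  exact Finset.prod_congr rfl fun i _ => by push_cast; ring

lemma rf_congr {x y : ℚ} (h : x = y) (k : ℕ) : rf x k = rf y k := by rw [h]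

lemma rf_ne_zero {x : ℚ} {n : ℕ} (h : ∀ j : ℕ, j < n → x + j ≠ 0) : rf x n ≠ 0 := by
  rw [rf]
  exact Finset.prod_ne_zero_iff.mpr fun i hi => h i (Finset.mem_range.mp hi)

lemma rf_split {x : ℚ} {k n : ℕ} (h : k ≤ n) :
    rf x n = rf x k * rf (x + k) (n - k) := by
  conv_lhs => rw [← Nat.add_sub_cancel' h]
  exact rf_add x k (n - k)

lemma rf_neg_nat {n k : ℕ} (h : k ≤ n) :
    rf (-(n:ℚ)) k = (-1)^k * (n.choose k) * (Nat.factorial k : ℚ) := by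
  induction k with
  | zero => simp [rf_zero]
  | succ k ih =>
    have hk : k ≤ n := Nat.le_of_succ_le h
    have hkn : k < n := h
    rw [rf_succ, ih hk]
    have hch : (n.choose (k+1) : ℚ) * (k+1) = (n.choose k : ℚ) * ((n:ℚ) - k) := by
      have := Nat.choose_succ_right_eq n k
      have h2 : ((n - k : ℕ) : ℚ) = (n : ℚ) - k := by
        exact Nat.cast_sub hk
      calc (n.choose (k+1) : ℚ) * (k+1) = ((n.choose (k+1) * (k+1) : ℕ) : ℚ) := by push_cast; ring
        _ = ((n.choose k * (n - k) : ℕ) : ℚ) := by rw [this]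
        _ = (n.choose k : ℚ) * ((n:ℚ) - k) := by push_cast [h2]; ring
    have hfac : (Nat.factorial (k+1) : ℚ) = (k+1) * (Nat.factorial k) := by
      rw [Nat.factorial_succ]; push_cast; ring
    rw [hfac]
    linear_combination ((-1:ℚ)^k * (Nat.factorial k : ℚ)) * hch

lemma rf_reflect (y : ℚ) (n : ℕ) : rf (1 - y - n) n = (-1)^n * rf y n := by
  have h1 : rf (1 - y - n) n = ∏ i ∈ Finset.range n, (-(y + ((n - 1 - i : ℕ) : ℚ))) := by
    rw [rf]
    refine Finset.prod_congr rfl fun i hi => ?_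
    have hi' : i < n := Finset.mem_range.mp hi
    have : ((n - 1 - i : ℕ) : ℚ) = (n : ℚ) - 1 - i := by
      have : ((n - 1 - i : ℕ)) = n - 1 - i := rfl
      push_cast [Nat.cast_sub (by omega : i ≤ n - 1), Nat.cast_sub (by omega : 1 ≤ n)]
      ring
    rw [this]; ring
  rw [h1]
  have h2 : ∀ i ∈ Finset.range n, (-(y + ((n - 1 - i : ℕ) : ℚ)))
      = (-1) * (y + ((n - 1 - i : ℕ) : ℚ)) := fun i _ => by ring
  rw [Finset.prod_congr rfl h2, Finset.prod_mul_distrib, Finset.prod_const,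
    Finset.card_range, Finset.prod_range_reflect (fun i => (y + (i : ℚ))) n, rf]

/-- Polynomial-form term of the Pfaff–Saalschütz sum. -/
def Tm (a b c : ℚ) (n k : ℕ) : ℚ :=
  (-1:ℚ)^k * (n.choose k) * rf a k * rf b k * rf (c + k) (n - k) *
    rf (1 + a + b - c - (n:ℚ) + k) (n - k)

/-- Telescoping certificate. -/
def Hm (a b c : ℚ) (n k : ℕ) : ℚ :=
  (k:ℚ) * (-1:ℚ)^k * ((n+1).choose k) * rf a k * rf b k * rf (c - 1 + k) (n + 1 - k) *
    rf (1 + a + b - c - ((n:ℚ)+1) + k) (n + 1 - k)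

lemma key2 (a b c : ℚ) (n k : ℕ) (hk : k ≤ n + 1) :
    ((n:ℚ)+1) * Tm a b c (n+1) k
      + ((n:ℚ)+1) * ((c - a + n) * (c - b + n)) * Tm a b c n k
    = Hm a b c n k - Hm a b c n (k+1) := by
  rcases Nat.lt_or_ge k (n+1) with hkn | hkn
  · -- k ≤ n
    obtain ⟨m, rfl⟩ := Nat.exists_eq_add_of_le (Nat.lt_succ_iff.mp hkn)
    simp only [Tm, Hm]
    rw [show k + m + 1 - k = m + 1 from by omega, show k + m - k = m from by omega,
        show k + m + 1 - (k + 1) = m from by omega]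
    push_cast
    have h1 : rf (c + (k:ℚ)) (m+1) = rf (c + (k:ℚ)) m * (c + (k:ℚ) + m) := by
      rw [rf_succ]
    have h2 : rf (1 + a + b - c - ((k:ℚ) + m + 1) + k) (m+1)
        = (1 + a + b - c - ((k:ℚ) + m + 1) + k) * rf (1 + a + b - c - ((k:ℚ) + m) + k) m := by
      rw [rf_succ', rf_congr (show (1 + a + b - c - ((k:ℚ) + m + 1) + k) + 1
        = 1 + a + b - c - ((k:ℚ) + m) + k from by ring) m]
    have h3 : rf (c - 1 + (k:ℚ)) (m+1) = (c - 1 + (k:ℚ)) * rf (c + (k:ℚ)) m := by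
      rw [rf_succ', rf_congr (show (c - 1 + (k:ℚ)) + 1 = c + (k:ℚ) from by ring) m]
    have h4 : rf a (k+1) = rf a k * (a + k) := rf_succ a k
    have h5 : rf b (k+1) = rf b k * (b + k) := rf_succ b k
    have h6 : rf (c - 1 + ((k:ℚ)+1)) m = rf (c + (k:ℚ)) m := rf_congr (by ring) m
    have h7 : rf (1 + a + b - c - ((k:ℚ) + m + 1) + ((k:ℚ)+1)) m
        = rf (1 + a + b - c - ((k:ℚ) + m) + k) m := rf_congr (by ring) m
    have hx : ((k+m).choose k : ℚ) * ((k:ℚ) + m + 1)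
        = (((k+m+1).choose k : ℕ) : ℚ) * ((m:ℚ) + 1) := by
      have := Nat.choose_mul_succ_eq (k+m) k
      rw [show k + m + 1 - k = m + 1 from by omega] at this
      exact_mod_cast this
    have hz : ((k:ℚ)+1) * (((k+m+1).choose (k+1) : ℕ) : ℚ)
        = ((k:ℚ) + m + 1) * ((k+m).choose k : ℚ) := by
      have h' : (k+m+1) * ((k+m).choose k) = ((k+m+1).choose (k+1)) * (k+1) :=
        Nat.add_one_mul_choose_eq (k+m) k
      have h2 : ((k+1) * ((k+m+1).choose (k+1)) : ℕ) = (k+m+1) * ((k+m).choose k) := by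
        rw [mul_comm]; exact h'.symm
      exact_mod_cast h2
    rw [h1, h2, h3, h4, h5, h6, h7]
    linear_combination ((-1:ℚ)^k * rf a k * rf b k * rf (c + (k:ℚ)) m *
        rf (1 + a + b - c - ((k:ℚ) + m) + k) m) *
      ((((c - a + ((k:ℚ)+m)) * (c - b + ((k:ℚ)+m)) - (a+(k:ℚ))*(b+(k:ℚ))) * hx
        - (a+(k:ℚ))*(b+(k:ℚ)) * hz))
  · -- k = n+1
    have hk1 : k = n + 1 := le_antisymm hk hkn
    subst hk1
    have hch : (n+1).choose (n+2) = 0 := Nat.choose_eq_zero_of_lt (by omega)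
    have hch2 : n.choose (n+1) = 0 := Nat.choose_eq_zero_of_lt (by omega)
    simp only [Tm, Hm, hch, hch2, Nat.choose_self, Nat.sub_self,
      show n + 1 - (n+1) = 0 from by omega, show n + 1 - n = 1 from by omega,
      show n + 1 + 1 - (n+1) = 1 from by omega, show n+1+1-(n+1+1) = 0 from by omega,
      rf_zero]
    push_cast
    ring

lemma key (a b c : ℚ) (n : ℕ) :
    ∑ k ∈ Finset.range (n+1), Tm a b c n k = (-1)^n * rf (c-a) n * rf (c-b) n := by
  induction n with
  | zero => simp [Tm, rf_zero]
  | succ n ih =>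
    have hsum : ∑ k ∈ Finset.range (n+2),
        (((n:ℚ)+1) * Tm a b c (n+1) k
          + ((n:ℚ)+1) * ((c - a + n) * (c - b + n)) * Tm a b c n k)
        = ∑ k ∈ Finset.range (n+2), (Hm a b c n k - Hm a b c n (k+1)) :=
      Finset.sum_congr rfl fun k hk =>
        key2 a b c n k (by have := Finset.mem_range.mp hk; omega)
    rw [Finset.sum_range_sub' (Hm a b c n) (n+2)] at hsum
    have hH0 : Hm a b c n 0 = 0 := by simp [Hm]
    have hH2 : Hm a b c n (n+2) = 0 := by
      have h : (n+1).choose (n+2) = 0 := Nat.choose_eq_zero_of_lt (by omega)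
      simp [Hm, h]
    rw [hH0, hH2, Finset.sum_add_distrib, ← Finset.mul_sum, ← Finset.mul_sum] at hsum
    have hT0 : Tm a b c n (n+1) = 0 := by
      have h : n.choose (n+1) = 0 := Nat.choose_eq_zero_of_lt (by omega)
      simp [Tm, h]
    rw [Finset.sum_range_succ (Tm a b c n) (n+1), hT0, add_zero, ih] at hsum
    rw [show n + 1 + 1 = n + 2 from rfl]
    have hne : ((n:ℚ)+1) ≠ 0 := by positivity
    rw [rf_succ (c-a) n, rf_succ (c-b) n]
    apply mul_left_cancel₀ hne
    linear_combination hsum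

/-- Pfaff–Saalschütz summation: for a nonnegative integer `n`,
`∑_{k=0}^{n} (a)_k (b)_k (-n)_k / ((c)_k (1+a+b-c-n)_k k!)
  = (c-a)_n (c-b)_n / ((c)_n (c-a-b)_n)`,
provided the lower parameters avoid forbidden nonpositive integer values. -/
theorem pfaff_saalschuetz (n : ℕ) (a b c : ℚ)
    (hc : ∀ k : ℕ, k < n → c + k ≠ 0)
    (hd : ∀ k : ℕ, k < n → (1 + a + b - c - (n : ℚ)) + k ≠ 0)
    (he : rf (c - a - b) n ≠ 0) :
    ∑ k ∈ Finset.range (n + 1),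
        rf a k * rf b k * rf (-(n : ℚ)) k /
          (rf c k * rf (1 + a + b - c - (n : ℚ)) k * (Nat.factorial k : ℚ)) =
      rf (c - a) n * rf (c - b) n / (rf c n * rf (c - a - b) n) := by
  have hcn : rf c n ≠ 0 := rf_ne_zero hc
  have hdn : rf (1 + a + b - c - (n:ℚ)) n ≠ 0 := rf_ne_zero hd
  have hterm : ∀ k ∈ Finset.range (n+1),
      rf a k * rf b k * rf (-(n : ℚ)) k /
          (rf c k * rf (1 + a + b - c - (n : ℚ)) k * (Nat.factorial k : ℚ))
        = Tm a b c n k / (rf c n * rf (1 + a + b - c - (n:ℚ)) n) := by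
    intro k hk
    have hkn : k ≤ n := Nat.lt_succ_iff.mp (Finset.mem_range.mp hk)
    have hsc : rf c n = rf c k * rf (c + k) (n - k) := rf_split hkn
    have hsd : rf (1 + a + b - c - (n:ℚ)) n
        = rf (1 + a + b - c - (n:ℚ)) k * rf (1 + a + b - c - (n:ℚ) + k) (n - k) :=
      rf_split hkn
    have hneg := rf_neg_nat (n := n) (k := k) hkn
    have hck : rf c k ≠ 0 := rf_ne_zero fun j hj => hc j (by omega)
    have hdk : rf (1+a+b-c-(n:ℚ)) k ≠ 0 := rf_ne_zero fun j hj => hd j (by omega)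
    have hckr : rf (c + (k:ℚ)) (n-k) ≠ 0 := rf_ne_zero fun j hj => by
      have h := hc (k+j) (by omega)
      push_cast at h
      rwa [add_assoc]
    have hdkr : rf (1 + a + b - c - (n:ℚ) + k) (n-k) ≠ 0 := rf_ne_zero fun j hj => by
      have h := hd (k+j) (by omega)
      push_cast at h
      rwa [add_assoc]
    have hfk : (Nat.factorial k : ℚ) ≠ 0 := Nat.cast_ne_zero.mpr k.factorial_ne_zero
    rw [hneg, div_eq_div_iff (mul_ne_zero (mul_ne_zero hck hdk) hfk)
      (mul_ne_zero hcn hdn), hsc, hsd, Tm]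
    ring
  rw [Finset.sum_congr rfl hterm, ← Finset.sum_div, key]
  have hrefl : rf (1 + a + b - c - (n:ℚ)) n = (-1)^n * rf (c-a-b) n := by
    rw [rf_congr (show (1 + a + b - c - (n:ℚ)) = 1 - (c-a-b) - n from by ring) n,
      rf_reflect]
  rw [hrefl]
  rw [div_eq_div_iff
    (mul_ne_zero hcn (mul_ne_zero (pow_ne_zero n (by norm_num : (-1:ℚ) ≠ 0)) he))
    (mul_ne_zero hcn he)]
  ring
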